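/- The space of prime filters of a bounded distributive lattice D is Hausdorff if and only if D is a Boolean algebra (every element of D has a complement). -/
import Mathlib


/-- A filter on a bounded (distributive) lattice: nonempty, proper,
upward closed, and closed under meets. -/
def IsLatticeFilter {D : Type*} [Lattice D] (F : Set D) : Prop :=
  F.Nonempty ∧ F ≠ Set.univ ∧ (∀ a ∈ F, ∀ b, a ≤ b → b ∈ F) ∧
    ∀ a ∈ F, ∀ b ∈ F, a ⊓ b ∈ F

/-- A prime filter. -/
def IsPrimeLatticeFilter {D : Type*} [Lattice D] (F : Set D) : Prop :=
  IsLatticeFilter F ∧ ∀ a b : D, a ⊔ b ∈ F → a ∈ F ∨ b ∈ F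

/-- The space of prime filters of a lattice. -/
def PrimeFilterSpace (D : Type*) [Lattice D] : Type _ :=
  {F : Set D // IsPrimeLatticeFilter F}

/-- The basic open set associated to a lattice element. -/
def basicOpen {D : Type*} [Lattice D] (a : D) : Set (PrimeFilterSpace D) :=
  {p | a ∈ p.1}

/-- The Stone topology on the space of prime filters. -/
instance {D : Type*} [Lattice D] : TopologicalSpace (PrimeFilterSpace D) :=
  TopologicalSpace.generateFrom (Set.range (basicOpen (D := D)))

namespace StoneAux

variable {D : Type*} [DistribLattice D] [BoundedOrder D]

lemma mem_of_le (p : PrimeFilterSpace D) {x y : D} (hx : x ∈ p.1) (hxy : x ≤ y) :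
    y ∈ p.1 := p.2.1.2.2.1 x hx y hxy

lemma top_mem (p : PrimeFilterSpace D) : (⊤ : D) ∈ p.1 := by
  obtain ⟨x, hx⟩ := p.2.1.1
  exact mem_of_le p hx le_top

lemma bot_not_mem (p : PrimeFilterSpace D) : (⊥ : D) ∉ p.1 := by
  intro hb
  exact p.2.1.2.1 (Set.eq_univ_of_forall fun x => mem_of_le p hb bot_le)

lemma isOpen_basicOpen (a : D) : IsOpen (basicOpen a) :=
  TopologicalSpace.GenerateOpen.basic _ ⟨a, rfl⟩

lemma basicOpen_top : basicOpen (⊤ : D) = Set.univ :=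
  Set.eq_univ_of_forall fun p => top_mem p

/-- Every open set is a union of basic opens. -/
lemma exists_basic_subset {U : Set (PrimeFilterSpace D)} (hU : IsOpen U)
    {p : PrimeFilterSpace D} (hp : p ∈ U) : ∃ b ∈ p.1, basicOpen b ⊆ U := by
  induction hU with
  | basic V hV =>
    obtain ⟨a, rfl⟩ := hV
    exact ⟨a, hp, le_refl _⟩
  | univ => exact ⟨⊤, top_mem p, fun _ _ => trivial⟩
  | inter V W _ _ ihV ihW =>
    obtain ⟨b, hb, hbV⟩ := ihV hp.1
    obtain ⟨c, hc, hcW⟩ := ihW hp.2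
    refine ⟨b ⊓ c, p.2.1.2.2.2 b hb c hc, fun q hq => ?_⟩
    exact ⟨hbV (mem_of_le q hq inf_le_left), hcW (mem_of_le q hq inf_le_right)⟩
  | sUnion S _ ih =>
    obtain ⟨V, hVS, hpV⟩ := hp
    obtain ⟨b, hb, hbV⟩ := ih V hVS hpV
    exact ⟨b, hb, hbV.trans (Set.subset_sUnion_of_mem hVS)⟩

lemma finset_sup_mem {p : PrimeFilterSpace D} {ι : Type*} {T : Finset ι} {f : ι → D}
    (h : T.sup f ∈ p.1) : ∃ i ∈ T, f i ∈ p.1 := by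
  classical
  induction T using Finset.induction_on with
  | empty => simp only [Finset.sup_empty] at h; exact absurd h (bot_not_mem p)
  | @insert x T' hx ih =>
    rw [Finset.sup_insert] at h
    rcases p.2.2 _ _ h with h1 | h2
    · exact ⟨x, Finset.mem_insert_self _ _, h1⟩
    · obtain ⟨i, hiT, hf⟩ := ih h2
      exact ⟨i, Finset.mem_insert_of_mem hiT, hf⟩

/-- The prime filter existence theorem, via Mathlib's separator. -/
lemma exists_primeFilter (S : Set D) (a : D)
    (h : ∀ T : Finset D, ↑T ⊆ S → ¬ a ≤ T.sup id) :
    ∃ p : PrimeFilterSpace D, a ∈ p.1 ∧ ∀ b ∈ S, b ∉ p.1 := by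
  classical
  -- the ideal generated by S
  let I : Order.Ideal D :=
    { carrier := {x | ∃ T : Finset D, ↑T ⊆ S ∧ x ≤ T.sup id}
      lower' := fun x y hyx ⟨T, hTS, hx⟩ => ⟨T, hTS, hyx.trans hx⟩
      nonempty' := ⟨⊥, ∅, by simp⟩
      directed' := fun x ⟨T1, hT1, hx1⟩ y ⟨T2, hT2, hy2⟩ =>
        ⟨x ⊔ y, ⟨T1 ∪ T2, by
          constructor
          · intro z hz
            rcases Finset.mem_union.1 hz with hz | hz
            · exact hT1 hz
            · exact hT2 hz
          · exact sup_le (hx1.trans (Finset.sup_mono Finset.subset_union_left))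
              (hy2.trans (Finset.sup_mono Finset.subset_union_right))⟩,
          le_sup_left, le_sup_right⟩ }
  let F : Order.PFilter D := Order.PFilter.principal a
  have hdisj : Disjoint (F : Set D) (I : Set D) := by
    rw [Set.disjoint_left]
    rintro x hxF ⟨T, hTS, hxT⟩
    exact h T hTS (le_trans (Order.PFilter.mem_principal.1 hxF) hxT)
  obtain ⟨J, hJprime, hIJ, hJF⟩ :=
    DistribLattice.prime_ideal_of_disjoint_filter_ideal hdisj
  refine ⟨⟨(↑J : Set D)ᶜ, ⟨⟨?_, ?_, ?_, ?_⟩, ?_⟩⟩, ?_, ?_⟩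
  · exact ⟨a, Set.disjoint_left.1 hJF (Order.PFilter.mem_principal.2 (le_refl a))⟩
  · intro hcU
    have : (⊥ : D) ∈ (↑J : Set D)ᶜ := hcU ▸ Set.mem_univ _
    exact this J.bot_mem
  · exact fun x hx y hxy hyJ => hx (J.lower hxy hyJ)
  · intro x hx y hy
    intro hxy
    rcases hJprime.mem_or_mem hxy with h1 | h1
    · exact hx h1
    · exact hy h1
  · intro x y hxy
    by_contra hc
    push_neg at hc
    obtain ⟨hx, hy⟩ := hc
    exact hxy (J.sup_mem (not_not.1 hx) (not_not.1 hy))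
  · exact Set.disjoint_left.1 hJF (Order.PFilter.mem_principal.2 (le_refl a))
  · intro b hbS hbp
    exact hbp (hIJ ⟨{b}, by simpa using hbS, by simp⟩)

lemma isCompact_basicOpen (a : D) : IsCompact (basicOpen a) := by
  classical
  refine isCompact_of_finite_subcover fun {ι} U hUo hcov => ?_
  set S : Set D := {b : D | ∃ i, basicOpen b ⊆ U i} with hS
  by_cases hex : ∃ T : Finset D, ↑T ⊆ S ∧ a ≤ T.sup id
  · obtain ⟨T, hTS, haT⟩ := hex
    choose g hg using fun (b : D) (hb : b ∈ S) => hb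
    have hgT : ∀ b ∈ T, ∃ i, basicOpen b ⊆ U i := fun b hb => hTS hb
    choose G hG using hgT
    refine ⟨T.attach.image fun b => G b.1 b.2, fun p hp => ?_⟩
    have : T.sup id ∈ p.1 := mem_of_le p hp haT
    obtain ⟨b, hbT, hbp⟩ := finset_sup_mem this
    refine Set.mem_biUnion (Finset.mem_image.2 ⟨⟨b, hbT⟩, Finset.mem_attach _ _, rfl⟩)
      (hG b hbT hbp)
  · push_neg at hex
    exfalso
    obtain ⟨p, hap, hpS⟩ := exists_primeFilter S a fun T hTS => hex T hTS
    obtain ⟨i, hpi⟩ := Set.mem_iUnion.1 (hcov hap)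
    obtain ⟨b, hbp, hbU⟩ := exists_basic_subset (hUo i) hpi
    exact hpS b ⟨i, hbU⟩ hbp

end StoneAux

open StoneAux in
theorem primeFilterSpace_t2_iff_boolean (D : Type*) [DistribLattice D] [BoundedOrder D] :
    T2Space (PrimeFilterSpace D) ↔ ∀ a : D, ∃ b : D, a ⊓ b = ⊥ ∧ a ⊔ b = ⊤ := by
  constructor
  · intro h2
    by_cases hdeg : (⊥ : D) = ⊤
    · intro a
      have ha : a = ⊥ := le_antisymm (le_top.trans hdeg.ge) bot_le
      exact ⟨a, by simp [ha], by rw [ha, ← hdeg]; simp⟩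
    intro a
    have hK : IsCompact (basicOpen a) := isCompact_basicOpen a
    have hclosed : IsClosed (basicOpen a) := hK.isClosed
    set C : Set (PrimeFilterSpace D) := (basicOpen a)ᶜ with hC
    have hCopen : IsOpen C := hclosed.isOpen_compl
    have hCcpt : IsCompact C := by
      have huniv : IsCompact (Set.univ : Set (PrimeFilterSpace D)) := by
        rw [← basicOpen_top]; exact isCompact_basicOpen ⊤
      exact huniv.of_isClosed_subset (isOpen_basicOpen a).isClosed_compl (Set.subset_univ _)
    -- cover C by basic opens contained in C
    obtain ⟨t, ht⟩ := hCcpt.elim_finite_subcover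
      (fun i : {b : D // basicOpen b ⊆ C} => basicOpen i.1)
      (fun i => isOpen_basicOpen i.1)
      (by
        intro p hp
        obtain ⟨b, hbp, hbC⟩ := exists_basic_subset hCopen hp
        exact Set.mem_iUnion.2 ⟨⟨b, hbC⟩, hbp⟩)
    set c : D := t.sup fun i => i.1 with hc
    have hsub1 : basicOpen c ⊆ C := by
      intro p hp
      obtain ⟨i, _, hip⟩ := finset_sup_mem hp
      exact i.2 hip
    have hsub2 : C ⊆ basicOpen c := by
      intro p hp
      obtain ⟨i, hit, hip⟩ := Set.mem_iUnion₂.1 (ht hp)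
      exact mem_of_le p hip (Finset.le_sup (f := fun i => i.1) hit)
    refine ⟨c, ?_, ?_⟩
    · by_contra hne
      have harg : ∀ T : Finset D, ↑T ⊆ (∅ : Set D) → ¬ a ⊓ c ≤ T.sup id := by
        intro T hT hle
        have hTe : T = ∅ := Finset.coe_eq_empty.1 (Set.subset_empty_iff.1 hT)
        rw [hTe, Finset.sup_empty] at hle
        exact hne (le_bot_iff.1 hle)
      obtain ⟨p, hp, -⟩ := exists_primeFilter ∅ (a ⊓ c) harg
      have hpa : p ∈ basicOpen a := mem_of_le p hp inf_le_left
      have hpc : p ∈ basicOpen c := mem_of_le p hp inf_le_right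
      exact hsub1 hpc hpa
    · by_contra hne
      have harg : ∀ T : Finset D, ↑T ⊆ ({a ⊔ c} : Set D) → ¬ (⊤ : D) ≤ T.sup id := by
        intro T hT hle
        have hTle : T.sup id ≤ a ⊔ c := Finset.sup_le fun b hb => by
          have hb' : b = a ⊔ c := hT hb
          simp [hb']
        exact hne (top_le_iff.1 (hle.trans hTle))
      obtain ⟨p, -, hpS⟩ := exists_primeFilter {a ⊔ c} ⊤ harg
      have hpa : p ∉ basicOpen a := fun hpa =>
        hpS _ rfl (mem_of_le p hpa le_sup_left)
      have hpc : p ∈ basicOpen c := hsub2 hpa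
      exact hpS _ rfl (mem_of_le p hpc le_sup_right)
  · intro hB
    refine ⟨fun p q hpq => ?_⟩
    have hne : p.1 ≠ q.1 := fun h => hpq (Subtype.ext h)
    have : ∃ x : D, (x ∈ p.1 ∧ x ∉ q.1) ∨ (x ∈ q.1 ∧ x ∉ p.1) := by
      by_contra hc
      push_neg at hc
      refine hne (Set.ext fun x => ⟨fun hx => ?_, fun hx => ?_⟩)
      · exact (hc x).1 hx
      · exact (hc x).2 hx
    obtain ⟨x, hx⟩ := this
    obtain ⟨y, hxy1, hxy2⟩ := hB x
    have hdisj : Disjoint (basicOpen x) (basicOpen y) := by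
      rw [Set.disjoint_left]
      intro r hrx hry
      have : x ⊓ y ∈ r.1 := r.2.1.2.2.2 x hrx y hry
      rw [hxy1] at this
      exact bot_not_mem r this
    rcases hx with ⟨hxp, hxq⟩ | ⟨hxq, hxp⟩
    · have hyq : y ∈ q.1 := by
        rcases q.2.2 x y (by rw [hxy2]; exact top_mem q) with h | h
        · exact absurd h hxq
        · exact h
      exact ⟨basicOpen x, basicOpen y, isOpen_basicOpen x, isOpen_basicOpen y, hxp, hyq, hdisj⟩
    · have hyp : y ∈ p.1 := by
        rcases p.2.2 x y (by rw [hxy2]; exact top_mem p) with h | h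
        · exact absurd h hxp
        · exact h
      exact ⟨basicOpen y, basicOpen x, isOpen_basicOpen y, isOpen_basicOpen x, hyp, hxq,
        hdisj.symm⟩
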